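/- arXiv:1502.05547 — 2 statements merged into one kernel-verified Lean document; each statement's English description precedes it below -/
import Mathlib

section
/- Let $X$ be a vector space of odd dimension $n = 2m+1 \geq 3$ over $\mathbb{F}_q$, and let $X = X_1 \cup \cdots \cup X_t$ be a nontrivial subspace partition of $X$ (so $t > 1$). Then $t \geq q^{m+1} + 1$. -/
/-!
Every nonzero vector lies in exactly one part, so counting nonzero vectors gives
`q ^ n - 1 = ∑ i, (q ^ dim X_i - 1)`. If every part has dimension at most `m`, this forces
`t ≥ (q ^ (2m+1) - 1) / (q ^ m - 1) > q ^ (m+1)`. Otherwise some part `X_i` has dimension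
`d ≥ m + 1`; every other part meets it trivially, so has dimension at most `n - d`, and the
`q ^ n - q ^ d = q ^ d (q ^ (n-d) - 1)` vectors outside `X_i` need at least `q ^ d` further parts.
-/

open Finset Module

theorem Finset.sum_pow_sub_one_le_card_mul {ι : Type*} {s : Finset ι} {q e : ℕ} {d : ι → ℕ}
    (hq : 0 < q) (hd : ∀ i ∈ s, d i ≤ e) :
    ∑ i ∈ s, (q ^ d i - 1) ≤ #s * (q ^ e - 1) := by
  rw [← smul_eq_mul]
  exact sum_le_card_nsmul _ _ _ fun i hi =>
    Nat.sub_le_sub_right (Nat.pow_le_pow_right hq (hd i hi)) 1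

namespace Submodule

theorem disjoint_of_existsUnique_mem {R X ι : Type*} [Semiring R] [AddCommMonoid X] [Module R X]
    {P : ι → Submodule R X} (hpart : ∀ x : X, x ≠ 0 → ∃! i, x ∈ P i) {i j : ι}
    (hij : i ≠ j) :
    Disjoint (P i) (P j) := by
  refine disjoint_def.mpr fun x hxi hxj => ?_
  by_contra hx
  exact hij ((hpart x hx).unique hxi hxj)

theorem sum_natCard_sub_one_of_existsUnique_mem {R X ι : Type*} [Semiring R] [AddCommMonoid X]
    [Module R X] [Fintype ι] [Finite X] {P : ι → Submodule R X}
    (hpart : ∀ x : X, x ≠ 0 → ∃! i, x ∈ P i) :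
    ∑ i, (Nat.card (P i) - 1) = Nat.card X - 1 := by
  classical
  have := Fintype.ofFinite X
  let nonzero (i : ι) : Finset X := ({x | x ∈ P i} : Finset X).erase 0
  have hmem {i : ι} {x : X} : x ∈ nonzero i ↔ x ≠ 0 ∧ x ∈ P i := by simp [nonzero]
  have hcover : univ.biUnion nonzero = univ.erase 0 := by
    ext x
    simp only [mem_biUnion, mem_univ, true_and, hmem, mem_erase, and_true]
    exact ⟨fun ⟨_, hx, _⟩ => hx, fun hx => ⟨_, hx, (hpart x hx).exists.choose_spec⟩⟩
  have hdisj : ((univ : Finset ι) : Set ι).PairwiseDisjoint nonzero := by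
    intro i _ j _ hij
    refine disjoint_left.mpr fun x hxi hxj => ?_
    rw [hmem] at hxi hxj
    exact hij ((hpart x hxi.1).unique hxi.2 hxj.2)
  have hcard (i : ι) : #(nonzero i) = Nat.card (P i) - 1 := by
    rw [card_erase_of_mem (by simp), ← Fintype.card_subtype, Nat.card_eq_fintype_card]
  rw [Nat.card_eq_fintype_card, ← card_univ, ← card_erase_of_mem (mem_univ 0), ← hcover,
    card_biUnion hdisj]
  simp only [hcard]

section FiniteField

variable {K X ι : Type*} [DivisionRing K] [Finite K] [AddCommGroup X] [Module K X]
  [Module.Finite K X] [Fintype ι] {P : ι → Submodule K X}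

theorem sum_pow_finrank_sub_one_of_existsUnique_mem
    (hpart : ∀ x : X, x ≠ 0 → ∃! i, x ∈ P i) :
    ∑ i, (Nat.card K ^ finrank K (P i) - 1) = Nat.card K ^ finrank K X - 1 := by
  have : Finite X := Module.finite_of_finite K
  rw [← natCard_eq_pow_finrank, ← sum_natCard_sub_one_of_existsUnique_mem hpart]
  exact sum_congr rfl fun i _ => by rw [natCard_eq_pow_finrank (K := K) (V := P i)]

theorem pow_finrank_sub_one_le_card_mul (hpart : ∀ x : X, x ≠ 0 → ∃! i, x ∈ P i) {e : ℕ}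
    (hle : ∀ i, finrank K (P i) ≤ e) :
    Nat.card K ^ finrank K X - 1 ≤ Fintype.card ι * (Nat.card K ^ e - 1) := by
  rw [← sum_pow_finrank_sub_one_of_existsUnique_mem hpart, ← card_univ]
  exact sum_pow_sub_one_le_card_mul Nat.card_pos fun i _ => hle i

theorem pow_finrank_le_card_sub_one (hpart : ∀ x : X, x ≠ 0 → ∃! i, x ∈ P i)
    (hne : ∀ i, P i ≠ ⊥) (hι : 1 < Fintype.card ι) (i₀ : ι) :
    Nat.card K ^ finrank K (P i₀) ≤ Fintype.card ι - 1 := by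
  classical
  have hcount := sum_pow_finrank_sub_one_of_existsUnique_mem hpart
  set q := Nat.card K
  set d := finrank K (P i₀)
  set e := finrank K X - d
  have hq : 1 < q := Finite.one_lt_card
  have hrank : d + e = finrank K X := Nat.add_sub_cancel' (P i₀).finrank_le
  have hcompl (i : ι) (hi : i ≠ i₀) : finrank K (P i) ≤ e := by
    have := (P i).finrank_add_finrank_le_of_disjoint (disjoint_of_existsUnique_mem hpart hi)
    omega
  have he : 0 < e := by
    obtain ⟨j, hj⟩ := Fintype.exists_ne_of_one_lt_card hι i₀
    have := one_le_finrank_iff.mpr (hne j)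
    have := hcompl j hj
    omega
  have hrest : ∑ i ∈ univ.erase i₀, (q ^ finrank K (P i) - 1) ≤
      (Fintype.card ι - 1) * (q ^ e - 1) := by
    simpa [card_erase_of_mem] using
      sum_pow_sub_one_le_card_mul (s := univ.erase i₀) (q := q) (by omega)
        fun i hi => hcompl i (ne_of_mem_erase hi)
  have hsplit :
      (q ^ d - 1) + ∑ i ∈ univ.erase i₀, (q ^ finrank K (P i) - 1) = q ^ d * q ^ e - 1 := by
    rw [add_sum_erase _ (fun i => q ^ finrank K (P i) - 1) (mem_univ i₀), ← pow_add, hrank]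
    exact hcount
  have hout : q ^ d * (q ^ e - 1) ≤ (Fintype.card ι - 1) * (q ^ e - 1) := by
    have : 0 < q ^ d := Nat.pow_pos (by omega)
    have : q ^ d ≤ q ^ d * q ^ e := Nat.le_mul_of_pos_right _ (Nat.pow_pos (by omega))
    rw [Nat.mul_sub_one]
    omega
  exact Nat.le_of_mul_le_mul_right hout (by have := Nat.one_lt_pow he.ne' hq; omega)

end FiniteField

end Submodule

theorem Nat.lt_of_pow_two_mul_add_one_sub_one_le {q m t : ℕ} (hq : 1 < q)
    (h : q ^ (2 * m + 1) - 1 ≤ t * (q ^ m - 1)) : q ^ (m + 1) < t := by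
  by_contra! ht
  have hone : 1 < q ^ (m + 1) := Nat.one_lt_pow (by omega) hq
  have hmono : q ^ (m + 1) ≤ q ^ (2 * m + 1) := Nat.pow_le_pow_right (by omega) (by omega)
  have hupper : t * (q ^ m - 1) ≤ q ^ (2 * m + 1) - q ^ (m + 1) :=
    calc t * (q ^ m - 1) ≤ q ^ (m + 1) * (q ^ m - 1) := Nat.mul_le_mul_right _ ht
      _ = q ^ (2 * m + 1) - q ^ (m + 1) := by rw [Nat.mul_sub_one, ← pow_add]; ring_nf
  omega

theorem partition_number_odd_general
    {K X : Type*} [Field K] [Fintype K] [AddCommGroup X] [Module K X] [FiniteDimensional K X]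
    (m : ℕ) (hdim : Module.finrank K X = 2 * m + 1)
    (t : ℕ) (ht : 1 < t) (P : Fin t → Submodule K X)
    (hne : ∀ i, P i ≠ ⊥)
    (hpart : ∀ x : X, x ≠ 0 → ∃! i, x ∈ P i) :
    Fintype.card K ^ (m + 1) + 1 ≤ t := by
  have hq : 1 < Nat.card K := Finite.one_lt_card
  rw [← Nat.card_eq_fintype_card]
  by_cases hsmall : ∀ i, finrank K (P i) ≤ m
  · have hcount := Submodule.pow_finrank_sub_one_le_card_mul hpart hsmall
    rw [hdim, Fintype.card_fin] at hcount
    exact Nat.lt_of_pow_two_mul_add_one_sub_one_le hq hcount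
  · obtain ⟨i₀, hi₀⟩ : ∃ i, m < finrank K (P i) := by simpa using hsmall
    have hlarge := Submodule.pow_finrank_le_card_sub_one hpart hne (by simpa using ht) i₀
    have hpow : Nat.card K ^ (m + 1) ≤ Nat.card K ^ finrank K (P i₀) :=
      Nat.pow_le_pow_right hq.le hi₀
    rw [Fintype.card_fin] at hlarge
    omega

theorem partition_number_odd
    {K X : Type*} [Field K] [Fintype K] [AddCommGroup X] [Module K X] [FiniteDimensional K X]
    (m : ℕ) (hm : 1 ≤ m) (hdim : Module.finrank K X = 2 * m + 1)
    (t : ℕ) (ht : 1 < t) (P : Fin t → Submodule K X)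
    (hne : ∀ i, P i ≠ ⊥)
    (hpart : ∀ x : X, x ≠ 0 → ∃! i, x ∈ P i) :
    Fintype.card K ^ (m + 1) + 1 ≤ t :=
  partition_number_odd_general m hdim t ht P hne hpart
end

section
/- Let $V$ be a vector space of finite dimension over $\mathbb{F}_q$ with $q \geq 5$, and let $\mathcal{M}$ be a constant rank $4$ subspace of the space of symmetric bilinear forms on $V$ with $\dim \mathcal{M} \geq 2$. Suppose $\mathcal{M}$ contains an element $f$ of negative type, and let $R = \mathrm{rad}\, f$. Then for any other nonzero element $g$ of $\mathcal{M}$ with $S = \mathrm{rad}\, g$, the intersection $R \cap S$ has codimension at most $1$ in both $R$ and $S$. -/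
/-!
Suppose `dim (R ∩ S) ≤ dim R - 2` (note `dim R = dim S`, as both forms have rank 4). Consider
the members `h` of the pencil spanned by `f` and `g` other than `f` itself: `g` and `f + a g` for
`a ≠ 0`, which all satisfy `rad f ∩ rad h = R ∩ S`. If `f` vanished on `rad h` for one of them, it
would vanish on `R + rad h`, of dimension at least `dim R + 2`, and `f` would have positive type.
So each of these `q` members yields `u, v ∈ rad h` with `f u v ≠ 0`. Radicals of distinct members
of a pencil of symmetric forms are orthogonal for every form of the pencil, so the `q ≥ 5`
functionals `f u` are linearly independent and `f` has rank at least `5`.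
-/

/-- The rank of a bilinear form `f` on `V`: `dim V - dim (rad f)`, where the radical of a
symmetric bilinear form is the kernel of the associated linear map `V →ₗ (V →ₗ K)`. -/
noncomputable def formRank (K : Type*) {V : Type*} [Field K] [AddCommGroup V] [Module K V]
    (f : V →ₗ[K] V →ₗ[K] K) : ℕ :=
  Module.finrank K V - Module.finrank K (LinearMap.ker f)

/-- A symmetric bilinear form `f` of even rank `2 * t` has positive type if the nondegenerate
form induced on `V / rad f` has a totally isotropic subspace of dimension `t`; equivalently,
there is a totally isotropic subspace `W` of `V` containing `rad f` with
`dim W = dim (rad f) + t`. It has negative type otherwise. -/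
def IsPositiveType {K V : Type*} [Field K] [AddCommGroup V] [Module K V]
    (f : V →ₗ[K] V →ₗ[K] K) (t : ℕ) : Prop :=
  ∃ W : Submodule K V, LinearMap.ker f ≤ W ∧ (∀ u ∈ W, ∀ v ∈ W, f u v = 0) ∧
    Module.finrank K W = Module.finrank K (LinearMap.ker f) + t

section

open Module LinearMap

variable {K V : Type*} [Field K] [AddCommGroup V] [Module K V]

lemma Submodule.exists_le_le_finrank_eq [FiniteDimensional K V] {A B : Submodule K V}
    (hAB : A ≤ B) {n : ℕ} (hA : finrank K A ≤ n) (hB : n ≤ finrank K B) :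
    ∃ W : Submodule K V, A ≤ W ∧ W ≤ B ∧ finrank K W = n := by
  obtain ⟨k, rfl⟩ := Nat.exists_eq_add_of_le hA
  induction k with
  | zero => exact ⟨A, le_rfl, hAB, rfl⟩
  | succ k ih =>
    obtain ⟨W, hAW, hWB, hW⟩ := ih (by omega) (by omega)
    have hlt : W < B := lt_of_le_of_ne hWB fun h => by subst h; omega
    obtain ⟨x, hxB, hxW⟩ := SetLike.exists_of_lt hlt
    refine ⟨W ⊔ span K {x}, le_sup_of_le_left hAW, sup_le hWB ?_, ?_⟩
    · rwa [Submodule.span_singleton_le_iff_mem]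
    · rw [Submodule.finrank_sup_span_singleton hxW, hW, add_assoc]

lemma finrank_ker_add_formRank [FiniteDimensional K V] (f : V →ₗ[K] V →ₗ[K] K) :
    finrank K (ker f) + formRank K f = finrank K V := by
  have := Submodule.finrank_le (ker f)
  unfold formRank
  omega

lemma finrank_ker_eq_of_formRank_eq [FiniteDimensional K V] {f h : V →ₗ[K] V →ₗ[K] K}
    (hfh : formRank K f = formRank K h) : finrank K (ker f) = finrank K (ker h) := by
  have := finrank_ker_add_formRank f
  have := finrank_ker_add_formRank h
  omega

lemma formRank_eq_finrank_range [FiniteDimensional K V] (f : V →ₗ[K] V →ₗ[K] K) :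
    formRank K f = finrank K (range f) := by
  have := finrank_range_add_finrank_ker f
  have := finrank_ker_add_formRank f
  omega

lemma isPositiveType_of_isotropic [FiniteDimensional K V] {f : V →ₗ[K] V →ₗ[K] K}
    (hf : ∀ x y, f x y = f y x) {C : Submodule K V} (hC : ∀ u ∈ C, ∀ v ∈ C, f u v = 0)
    {t : ℕ} (ht : finrank K (ker f ⊓ C : Submodule K V) + t ≤ finrank K C) :
    IsPositiveType f t := by
  have hsup : ∀ u ∈ ker f ⊔ C, ∀ v ∈ ker f ⊔ C, f u v = 0 := by
    intro u hu v hv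
    obtain ⟨a, ha, c, hc, rfl⟩ := Submodule.mem_sup.mp hu
    obtain ⟨a', ha', c', hc', rfl⟩ := Submodule.mem_sup.mp hv
    rw [mem_ker] at ha ha'
    simp [ha, hf c a', ha', hC c hc c' hc']
  have hdim := Submodule.finrank_sup_add_finrank_inf_eq (ker f) C
  obtain ⟨W, hfW, hW, hWdim⟩ :=
    Submodule.exists_le_le_finrank_eq (le_sup_left : ker f ≤ ker f ⊔ C)
      (Nat.le_add_right _ t) (by omega)
  exact ⟨W, hfW, fun u hu v hv => hsup u (hW hu) v (hW hv), hWdim⟩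

/-- The functionals `f (u i)` are linearly independent in `range f`. -/
lemma LinearMap.card_le_finrank_range_of_biorthogonal {W ι : Type*} [AddCommGroup W]
    [Module K W] [FiniteDimensional K V] [Fintype ι] (f : V →ₗ[K] W →ₗ[K] K)
    (u : ι → V) (v : ι → W) (hdiag : ∀ i, f (u i) (v i) ≠ 0)
    (horth : ∀ i j, i ≠ j → f (u i) (v j) = 0) :
    Fintype.card ι ≤ finrank K (range f) := by
  classical
  have hli : LinearIndependent K (f ∘ u) := by
    rw [Fintype.linearIndependent_iff]
    intro c hc j
    have hj := congrArg (fun φ : W →ₗ[K] K => φ (v j)) hc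
    simp only [Function.comp_apply, sum_apply, smul_apply, smul_eq_mul, LinearMap.zero_apply] at hj
    rw [Finset.sum_eq_single j (fun i _ hij => by rw [horth i j hij, mul_zero])
      (fun h => absurd (Finset.mem_univ j) h)] at hj
    exact (mul_eq_zero.mp hj).resolve_right (hdiag j)
  have hli' : LinearIndependent K (fun i => (⟨f (u i), mem_range_self f (u i)⟩ : range f)) :=
    LinearIndependent.of_comp (range f).subtype hli
  exact hli'.fintype_card_le_finrank

/-- The members of the pencil spanned by `f` and `g` other than `f`: `none ↦ g`,
`some a ↦ f + a • g`. -/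
def pencilForm (f g : V →ₗ[K] V →ₗ[K] K) : Option Kˣ → V →ₗ[K] V →ₗ[K] K
  | none => g
  | some a => f + (a : K) • g

section Pencil

variable {f g : V →ₗ[K] V →ₗ[K] K}

lemma pencilForm_mem {M : Submodule K (V →ₗ[K] V →ₗ[K] K)} (hf : f ∈ M) (hg : g ∈ M) :
    ∀ o, pencilForm f g o ∈ M
  | none => hg
  | some _ => M.add_mem hf (M.smul_mem _ hg)

lemma pencilForm_symm (hf : ∀ x y, f x y = f y x) (hg : ∀ x y, g x y = g y x) :
    ∀ o x y, pencilForm f g o x y = pencilForm f g o y x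
  | none, x, y => hg x y
  | some _, x, y => by simp [pencilForm, hf x y, hg x y]

lemma inf_ker_pencilForm (o : Option Kˣ) :
    ker f ⊓ ker (pencilForm f g o) = ker f ⊓ ker g := by
  rcases o with _ | a
  · rfl
  ext v
  simp only [Submodule.mem_inf, mem_ker, pencilForm, LinearMap.add_apply, LinearMap.smul_apply]
  constructor
  · rintro ⟨hfv, hv⟩
    rw [hfv, zero_add, smul_eq_zero] at hv
    exact ⟨hfv, hv.resolve_left a.ne_zero⟩
  · rintro ⟨hfv, hgv⟩
    simp [hfv, hgv]

lemma apply_eq_zero_of_mem_ker_pencilForm (hf : ∀ x y, f x y = f y x)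
    (hg : ∀ x y, g x y = g y x) {o o' : Option Kˣ} (hne : o ≠ o') {v w : V}
    (hv : v ∈ ker (pencilForm f g o)) (hw : w ∈ ker (pencilForm f g o')) : f v w = 0 := by
  have h₁ : pencilForm f g o v w = 0 := by rw [mem_ker.mp hv, LinearMap.zero_apply]
  have h₂ : pencilForm f g o' v w = 0 := by
    rw [pencilForm_symm hf hg, mem_ker.mp hw, LinearMap.zero_apply]
  rcases o with _ | a <;> rcases o' with _ | b <;>
    simp only [pencilForm, LinearMap.add_apply, LinearMap.smul_apply, smul_eq_mul] at h₁ h₂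
  · exact absurd rfl hne
  · linear_combination h₂ - (b : K) * h₁
  · linear_combination h₁ - (a : K) * h₂
  · have hab : (a : K) - b ≠ 0 :=
      sub_ne_zero.mpr fun h => hne (congrArg some (Units.ext h))
    have hdiff : ((a : K) - b) * g v w = 0 := by linear_combination h₁ - h₂
    have hg0 : g v w = 0 := (mul_eq_zero.mp hdiff).resolve_left hab
    linear_combination h₁ - (a : K) * hg0

end Pencil

end

theorem radical_intersection_general
    {K V : Type*} [Field K] [Fintype K] [AddCommGroup V] [Module K V] [FiniteDimensional K V]
    (hq : 5 ≤ Fintype.card K)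
    (M : Submodule K (V →ₗ[K] V →ₗ[K] K))
    (hsymm : ∀ f ∈ M, ∀ x y : V, f x y = f y x)
    (hrank : ∀ f ∈ M, f ≠ 0 → formRank K f = 4)
    (f : V →ₗ[K] V →ₗ[K] K) (hfM : f ∈ M) (hf0 : f ≠ 0)
    (hf_neg : ¬ IsPositiveType f 2)
    (g : V →ₗ[K] V →ₗ[K] K) (hgM : g ∈ M) (hg0 : g ≠ 0) :
    Module.finrank K (LinearMap.ker f) ≤
      Module.finrank K (LinearMap.ker f ⊓ LinearMap.ker g : Submodule K V) + 1 ∧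
    Module.finrank K (LinearMap.ker g) ≤
      Module.finrank K (LinearMap.ker f ⊓ LinearMap.ker g : Submodule K V) + 1 := by
  classical
  have hker : ∀ h ∈ M, h ≠ 0 →
      Module.finrank K (LinearMap.ker h) = Module.finrank K (LinearMap.ker f) :=
    fun h hhM hh0 => finrank_ker_eq_of_formRank_eq ((hrank h hhM hh0).trans (hrank f hfM hf0).symm)
  suffices hR : Module.finrank K (LinearMap.ker f) ≤
      Module.finrank K (LinearMap.ker f ⊓ LinearMap.ker g : Submodule K V) + 1 from
    ⟨hR, hker g hgM hg0 ▸ hR⟩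
  by_contra! hlt
  have hwit : ∀ o, ∃ u ∈ LinearMap.ker (pencilForm f g o),
      ∃ v ∈ LinearMap.ker (pencilForm f g o), f u v ≠ 0 := by
    intro o
    by_contra! hiso
    have h0 : pencilForm f g o ≠ 0 := fun h0 =>
      hf0 (LinearMap.ext₂ fun u v => hiso u (by simp [h0]) v (by simp [h0]))
    refine hf_neg (isPositiveType_of_isotropic (hsymm f hfM) hiso ?_)
    rw [inf_ker_pencilForm, hker _ (pencilForm_mem hfM hgM o) h0]
    omega
  choose u hu v hv huv using hwit
  have hcard := LinearMap.card_le_finrank_range_of_biorthogonal f u v huv fun o o' hne =>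
    apply_eq_zero_of_mem_ker_pencilForm (hsymm f hfM) (hsymm g hgM) hne (hu o) (hv o')
  rw [← formRank_eq_finrank_range, hrank f hfM hf0, Fintype.card_option,
    Fintype.card_units] at hcard
  omega

theorem radical_intersection
    {K V : Type*} [Field K] [Fintype K] [AddCommGroup V] [Module K V] [FiniteDimensional K V]
    (hq : 5 ≤ Fintype.card K)
    (M : Submodule K (V →ₗ[K] V →ₗ[K] K)) (hM0 : M ≠ ⊥)
    (hsymm : ∀ f ∈ M, ∀ x y : V, f x y = f y x)
    (hrank : ∀ f ∈ M, f ≠ 0 → formRank K f = 4)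
    (hMdim : 2 ≤ Module.finrank K M)
    (f : V →ₗ[K] V →ₗ[K] K) (hfM : f ∈ M) (hf0 : f ≠ 0)
    (hf_neg : ¬ IsPositiveType f 2)
    (g : V →ₗ[K] V →ₗ[K] K) (hgM : g ∈ M) (hg0 : g ≠ 0) (hgf : g ≠ f) :
    Module.finrank K (LinearMap.ker f) ≤
      Module.finrank K (LinearMap.ker f ⊓ LinearMap.ker g : Submodule K V) + 1 ∧
    Module.finrank K (LinearMap.ker g) ≤
      Module.finrank K (LinearMap.ker f ⊓ LinearMap.ker g : Submodule K V) + 1 :=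
  radical_intersection_general hq M hsymm hrank f hfM hf0 hf_neg g hgM hg0
end
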